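/- arXiv:1703.02027 — 4 statements merged into one kernel-verified Lean document; each statement's English description precedes it below -/
import Mathlib

section
/- Let ρ be the Laurent polynomial defined below (it is the numerator, after clearing denominators, of the generator z_1^{n_1} * ... * z_1^{n_k} of the small universal shuffle algebra associated to surfaces). Then for every pair of indices 1 ≤ a < b ≤ k, the image of ρ under the substitution z_a ↦ z_b (identifying the two variables) is 0 in A[z_1^{±1},...,z_k^{±1}]. -/
/-!
STATEMENT 0: The numerator ρ of the shuffle-algebra generator
`z_1^{n_1} * ... * z_1^{n_k}` (surface case) vanishes under any substitution
`z_a ↦ z_b` identifying two of the variables.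
-/

noncomputable section

open Finset

/-- The Laurent monomial `z_i^m` in the Laurent polynomial ring
`A[z_1^{±1},...,z_k^{±1}] = AddMonoidAlgebra A (Fin k →₀ ℤ)`. -/
def zmon {k : ℕ} {A : Type*} [CommRing A] (i : Fin k) (m : ℤ) :
    AddMonoidAlgebra A (Fin k →₀ ℤ) :=
  AddMonoidAlgebra.single (Finsupp.single i m) 1

/-- A constant `c ∈ A`, viewed as a Laurent polynomial. -/
def cst {k : ℕ} {A : Type*} [CommRing A] (c : A) :
    AddMonoidAlgebra A (Fin k →₀ ℤ) :=
  AddMonoidAlgebra.single (0 : Fin k →₀ ℤ) c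

/-- The Laurent polynomial
`ρ = Σ_{σ ∈ S(k)} sgn(σ) · z_1^{n_{σ(1)}} ⋯ z_k^{n_{σ(k)}} ·
  Π_{i<j} [ (z_j − z_i)(z_j q_j^{ε'} − z_i q_i^{ε}) + Δ_{ij} z_i z_j ]`,
where `ε = 1` if `σ(i) < σ(j)` and `ε = 0` otherwise, `ε' = 1 − ε`. -/
def rhoSurface {k : ℕ} {A : Type*} [CommRing A]
    (Δ : Fin k → Fin k → A) (q : Fin k → Aˣ) (n : Fin k → ℤ) :
    AddMonoidAlgebra A (Fin k →₀ ℤ) :=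
  ∑ σ : Equiv.Perm (Fin k),
    (Equiv.Perm.sign σ : ℤ) •
      ((∏ i : Fin k, zmon i (n (σ i))) *
        ∏ p ∈ Finset.univ.filter (fun p : Fin k × Fin k => p.1 < p.2),
          (if σ p.1 < σ p.2 then
              (zmon p.2 1 - zmon p.1 1) *
                  (zmon p.2 1 - cst (q p.1 : A) * zmon p.1 1) +
                cst (Δ p.1 p.2) * zmon p.1 1 * zmon p.2 1
            else
              (zmon p.2 1 - zmon p.1 1) *
                  (cst (q p.2 : A) * zmon p.2 1 - zmon p.1 1) +
                cst (Δ p.1 p.2) * zmon p.1 1 * zmon p.2 1))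

/-- The ring homomorphism of `A[z_1^{±1},...,z_k^{±1}]` given by the
substitution `z_a ↦ z_b` (all other variables fixed). -/
def substVar {k : ℕ} (A : Type*) [CommRing A] (a b : Fin k) :
    AddMonoidAlgebra A (Fin k →₀ ℤ) →+* AddMonoidAlgebra A (Fin k →₀ ℤ) :=
  AddMonoidAlgebra.mapDomainRingHom A
    (Finsupp.mapDomain.addMonoidHom (Function.update (id : Fin k → Fin k) a b))

/-!
Pair each permutation `σ` with `σ * swap a b`; the two terms of `ρ` carry opposite signs. The
diagonal action of `swap a b` (permuting the variables and acting on the coefficients) sends the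
term of `σ * swap a b` to the term of `σ`. After the substitution `z_a ↦ z_b` the permutation of
the variables is invisible, so only the coefficient action of `swap a b` remains. But the factor
of the pair `(a, b)` becomes `Δ_ab z_b²`, and `Δ_ab` annihilates `x - swap a b • x`, so that
coefficient action is trivial on the substituted term: the two terms cancel.
-/

open Equiv

theorem Finset.prod_filter_lt_comp_perm {ι M : Type*} [LinearOrder ι] [Fintype ι] [CommMonoid M]
    (f : ι → ι → M) (hf : ∀ i j, i ≠ j → f i j = f j i) (τ : Perm ι) :
    ∏ p ∈ univ.filter (fun p : ι × ι => p.1 < p.2), f (τ p.1) (τ p.2) =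
      ∏ p ∈ univ.filter (fun p : ι × ι => p.1 < p.2), f p.1 p.2 := by
  have hsorted : ∀ (π : ι ≃ ι) (p : ι × ι), p.1 < p.2 →
      min (π p.1) (π p.2) < max (π p.1) (π p.2) := fun π p h =>
    min_lt_max.2 (π.injective.ne h.ne)
  refine prod_nbij' (fun p => (min (τ p.1) (τ p.2), max (τ p.1) (τ p.2)))
    (fun p => (min (τ.symm p.1) (τ.symm p.2), max (τ.symm p.1) (τ.symm p.2)))
    (by simpa using hsorted τ) (by simpa using hsorted τ.symm) ?_ ?_ ?_
  all_goals
    rintro ⟨i, j⟩ hij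
    simp only [mem_filter, mem_univ, true_and] at hij
  · rcases lt_or_gt_of_ne (τ.injective.ne hij.ne) with h | h <;> simp [h.le, hij.le]
  · rcases lt_or_gt_of_ne (τ.symm.injective.ne hij.ne) with h | h <;> simp [h.le, hij.le]
  · rcases lt_or_gt_of_ne (τ.injective.ne hij.ne) with h | h
    · simp [h.le]
    · simp [h.le, hf _ _ h.ne]

theorem Equiv.Perm.sum_sign_smul_eq_zero {ι M : Type*} [DecidableEq ι] [Fintype ι]
    [AddCommGroup M] (f : Perm ι → M) {a b : ι} (hab : a ≠ b)
    (hf : ∀ σ, f (σ * swap a b) = f σ) :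
    ∑ σ : Perm ι, (Perm.sign σ : ℤ) • f σ = 0 := by
  refine sum_involution (fun σ _ => σ * swap a b) (fun σ _ => ?_) (fun σ _ _ h => ?_)
    (fun σ _ => mem_univ _) (fun σ _ => by simp [mul_assoc])
  · simp [hf, Perm.sign_swap hab]
  · have hswap : swap a b = 1 := mul_left_cancel (a := σ) (h.trans (mul_one σ).symm)
    exact hab.symm (by simpa using congrArg (· a) hswap)

namespace ShuffleSurface

variable {k : ℕ} {A : Type*} [CommRing A]

local notation "Laurent" => AddMonoidAlgebra A (Fin k →₀ ℤ)

variable (A) in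
def renameVars (f : Fin k → Fin k) : Laurent →+* Laurent :=
  AddMonoidAlgebra.mapDomainRingHom A (Finsupp.mapDomain.addMonoidHom f)

@[simp]
lemma renameVars_zmon (f : Fin k → Fin k) (i : Fin k) (m : ℤ) :
    renameVars A f (zmon i m) = zmon (f i) m := by
  simp [renameVars, zmon, Finsupp.mapDomain_single]

@[simp]
lemma renameVars_cst (f : Fin k → Fin k) (c : A) : renameVars A f (cst c) = cst c := by
  simp [renameVars, cst]

lemma renameVars_comp (f g : Fin k → Fin k) :
    (renameVars A f).comp (renameVars A g) = renameVars A (f ∘ g) := by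
  rw [renameVars, renameVars, renameVars, ← AddMonoidAlgebra.mapDomainRingHom_comp,
    Finsupp.mapDomain.addMonoidHom_comp]

lemma substVar_eq_renameVars (a b : Fin k) :
    substVar A a b = renameVars A (Function.update id a b) := rfl

lemma substVar_renameVars_swap (a b : Fin k) (x : Laurent) :
    substVar A a b (renameVars A (swap a b) x) = substVar A a b x := by
  have hcomp : Function.update id a b ∘ swap a b = Function.update (id : Fin k → Fin k) a b := by
    ext i
    grind [Function.update_apply]
  rw [substVar_eq_renameVars, ← RingHom.comp_apply, renameVars_comp, hcomp]

/-- The factor of `ρ` attached to the pair `{i, j}`, written symmetrically in `i` and `j`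
(see `pairFactor_comm`); for `i < j` it is the paper's factor, with `ε = 1` iff `σ i < σ j`. -/
def pairFactor (Δ : Fin k → Fin k → A) (q : Fin k → Aˣ) (σ : Perm (Fin k)) (i j : Fin k) :
    Laurent :=
  (zmon j 1 - zmon i 1) *
      (cst (if σ j < σ i then (q j : A) else 1) * zmon j 1 -
        cst (if σ i < σ j then (q i : A) else 1) * zmon i 1) +
    cst (Δ i j) * zmon i 1 * zmon j 1

def rhoTerm (Δ : Fin k → Fin k → A) (q : Fin k → Aˣ) (n : Fin k → ℤ) (σ : Perm (Fin k)) :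
    Laurent :=
  (∏ i, zmon i (n (σ i))) *
    ∏ p ∈ univ.filter (fun p : Fin k × Fin k => p.1 < p.2), pairFactor Δ q σ p.1 p.2

lemma rhoSurface_eq_sum_rhoTerm (Δ : Fin k → Fin k → A) (q : Fin k → Aˣ) (n : Fin k → ℤ) :
    rhoSurface Δ q n = ∑ σ, (Perm.sign σ : ℤ) • rhoTerm Δ q n σ := by
  refine sum_congr rfl fun σ _ => congrArg _ (congrArg _ (prod_congr rfl fun p hp => ?_))
  have hσ : σ p.1 ≠ σ p.2 := σ.injective.ne (mem_filter.1 hp).2.ne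
  rcases lt_or_gt_of_ne hσ with h | h <;>
    simp [pairFactor, h, h.not_gt, ← AddMonoidAlgebra.one_def, cst]

lemma pairFactor_comm {Δ : Fin k → Fin k → A} (q : Fin k → Aˣ) (σ : Perm (Fin k)) {i j : Fin k}
    (hΔ : Δ i j = Δ j i) : pairFactor Δ q σ i j = pairFactor Δ q σ j i := by
  rw [pairFactor, pairFactor, hΔ]
  ring

lemma substVar_pairFactor_self (Δ : Fin k → Fin k → A) (q : Fin k → Aˣ) (σ : Perm (Fin k))
    {a b : Fin k} (hab : a ≠ b) :
    substVar A a b (pairFactor Δ q σ a b) = cst (Δ a b) * (zmon b 1 * zmon b 1) := by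
  simp [pairFactor, substVar_eq_renameVars, hab.symm, mul_assoc]

lemma cst_dvd_substVar_rhoTerm (Δ : Fin k → Fin k → A) (q : Fin k → Aˣ) (n : Fin k → ℤ)
    (σ : Perm (Fin k)) {a b : Fin k} (hab : a < b) :
    cst (Δ a b) ∣ substVar A a b (rhoTerm Δ q n σ) := by
  have hmem : (a, b) ∈ univ.filter (fun p : Fin k × Fin k => p.1 < p.2) := by simp [hab]
  rw [rhoTerm, map_mul]
  refine Dvd.dvd.mul_left ?_ _
  rw [map_prod]
  have hfactor : cst (Δ a b) ∣ substVar A a b (pairFactor Δ q σ a b) :=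
    ⟨_, substVar_pairFactor_self Δ q σ hab.ne⟩
  have hprod := dvd_prod_of_mem (fun p => substVar A a b (pairFactor Δ q σ p.1 p.2)) hmem
  exact hfactor.trans hprod

section Action

variable [MulSemiringAction (Perm (Fin k)) A]

def coeffAct (τ : Perm (Fin k)) : Laurent →+* Laurent :=
  AddMonoidAlgebra.mapRingHom _ (MulSemiringAction.toRingHom _ A τ)

def diagAct (τ : Perm (Fin k)) : Laurent →+* Laurent :=
  (coeffAct τ).comp (renameVars A τ)

@[simp]
lemma coeffAct_zmon (τ : Perm (Fin k)) (i : Fin k) (m : ℤ) :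
    coeffAct τ (zmon i m : Laurent) = zmon i m := by
  simp [coeffAct, zmon]

@[simp]
lemma coeffAct_cst (τ : Perm (Fin k)) (c : A) : coeffAct τ (cst c : Laurent) = cst (τ • c) := by
  simp [coeffAct, cst]

@[simp]
lemma diagAct_zmon (τ : Perm (Fin k)) (i : Fin k) (m : ℤ) :
    diagAct τ (zmon i m : Laurent) = zmon (τ i) m := by
  simp [diagAct]

@[simp]
lemma diagAct_cst (τ : Perm (Fin k)) (c : A) : diagAct τ (cst c : Laurent) = cst (τ • c) := by
  simp [diagAct]

lemma substVar_coeffAct (a b : Fin k) (τ : Perm (Fin k)) (x : Laurent) :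
    substVar A a b (coeffAct τ x) = coeffAct τ (substVar A a b x) := by
  simp only [substVar, coeffAct, ← RingHom.comp_apply,
    AddMonoidAlgebra.mapRingHom_comp_mapDomainRingHom]

lemma substVar_diagAct_swap (a b : Fin k) (x : Laurent) :
    substVar A a b (diagAct (swap a b) x) = coeffAct (swap a b) (substVar A a b x) := by
  rw [diagAct, RingHom.comp_apply, substVar_coeffAct, substVar_renameVars_swap]

lemma coeffAct_cst_mul {τ : Perm (Fin k)} {d : A} (hd : τ • d = d)
    (hann : ∀ c : A, d * (c - τ • c) = 0) (x : Laurent) :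
    coeffAct τ (cst d * x) = cst d * x := by
  rw [map_mul, coeffAct_cst, hd, ← sub_eq_zero, ← mul_sub, ← neg_sub, mul_neg, neg_eq_zero]
  refine AddMonoidAlgebra.coeff_injective (Finsupp.ext fun g => ?_)
  simp [cst, coeffAct, hann]

lemma diagAct_pairFactor {Δ : Fin k → Fin k → A} {q : Fin k → Aˣ}
    (hΔact : ∀ (τ : Perm (Fin k)) (i j : Fin k), i ≠ j → τ • Δ i j = Δ (τ i) (τ j))
    (hqact : ∀ (τ : Perm (Fin k)) (i : Fin k), τ • (q i : A) = q (τ i))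
    (σ τ : Perm (Fin k)) {i j : Fin k} (hij : i ≠ j) :
    diagAct τ (pairFactor Δ q (σ * τ) i j) = pairFactor Δ q σ (τ i) (τ j) := by
  simp only [pairFactor, map_add, map_sub, map_mul, diagAct_zmon, diagAct_cst, hΔact τ i j hij]
  split_ifs <;> simp_all

lemma diagAct_rhoTerm {Δ : Fin k → Fin k → A} {q : Fin k → Aˣ}
    (hΔsym : ∀ i j : Fin k, i ≠ j → Δ i j = Δ j i)
    (hΔact : ∀ (τ : Perm (Fin k)) (i j : Fin k), i ≠ j → τ • Δ i j = Δ (τ i) (τ j))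
    (hqact : ∀ (τ : Perm (Fin k)) (i : Fin k), τ • (q i : A) = q (τ i))
    (n : Fin k → ℤ) (σ τ : Perm (Fin k)) :
    diagAct τ (rhoTerm Δ q n (σ * τ)) = rhoTerm Δ q n σ := by
  rw [rhoTerm, rhoTerm, map_mul, map_prod, map_prod]
  congr 1
  · simp only [diagAct_zmon, Perm.mul_apply]
    exact Equiv.prod_comp τ (fun i => zmon i (n (σ i)))
  · rw [prod_congr rfl fun p hp => diagAct_pairFactor hΔact hqact σ τ (mem_filter.1 hp).2.ne]
    exact prod_filter_lt_comp_perm (pairFactor Δ q σ)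
      (fun i j hij => pairFactor_comm q σ (hΔsym i j hij)) τ

lemma substVar_rhoTerm_mul_swap {Δ : Fin k → Fin k → A} {q : Fin k → Aˣ}
    (hΔsym : ∀ i j : Fin k, i ≠ j → Δ i j = Δ j i)
    (hΔact : ∀ (τ : Perm (Fin k)) (i j : Fin k), i ≠ j → τ • Δ i j = Δ (τ i) (τ j))
    (hqact : ∀ (τ : Perm (Fin k)) (i : Fin k), τ • (q i : A) = q (τ i))
    (hann : ∀ i j : Fin k, i ≠ j → ∀ x : A, Δ i j * (x - swap i j • x) = 0)
    (n : Fin k → ℤ) (σ : Perm (Fin k)) {a b : Fin k} (hab : a < b) :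
    substVar A a b (rhoTerm Δ q n (σ * swap a b)) = substVar A a b (rhoTerm Δ q n σ) := by
  obtain ⟨y, hy⟩ := cst_dvd_substVar_rhoTerm Δ q n (σ * swap a b) hab
  have hfix : swap a b • Δ a b = Δ a b := by
    rw [hΔact _ _ _ hab.ne, swap_apply_left, swap_apply_right, hΔsym _ _ hab.ne']
  calc substVar A a b (rhoTerm Δ q n (σ * swap a b))
      = coeffAct (swap a b) (substVar A a b (rhoTerm Δ q n (σ * swap a b))) := by
        rw [hy, coeffAct_cst_mul hfix (hann a b hab.ne)]
    _ = substVar A a b (rhoTerm Δ q n σ) := by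
        rw [← substVar_diagAct_swap, diagAct_rhoTerm hΔsym hΔact hqact]

end Action

end ShuffleSurface

open ShuffleSurface in
theorem statement0_general {k : ℕ} (A : Type*) [CommRing A]
    [MulSemiringAction (Equiv.Perm (Fin k)) A]
    (Δ : Fin k → Fin k → A) (q : Fin k → Aˣ)
    (hΔsym : ∀ i j : Fin k, i ≠ j → Δ i j = Δ j i)
    (hΔact : ∀ (σ : Equiv.Perm (Fin k)) (i j : Fin k), i ≠ j →
      σ • Δ i j = Δ (σ i) (σ j))
    (hqact : ∀ (σ : Equiv.Perm (Fin k)) (i : Fin k), σ • (q i : A) = (q (σ i) : A))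
    (hann : ∀ i j : Fin k, i ≠ j → ∀ x : A, Δ i j * (x - Equiv.swap i j • x) = 0)
    (n : Fin k → ℤ) (a b : Fin k) (hab : a < b) :
    substVar A a b (rhoSurface Δ q n) = 0 := by
  rw [rhoSurface_eq_sum_rhoTerm, map_sum]
  simp only [map_zsmul]
  exact Equiv.Perm.sum_sign_smul_eq_zero _ hab.ne
    (substVar_rhoTerm_mul_swap hΔsym hΔact hqact hann n · hab)

theorem statement0 {k : ℕ} (hk : 2 ≤ k) (A : Type*) [CommRing A]
    [MulSemiringAction (Equiv.Perm (Fin k)) A]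
    (Δ : Fin k → Fin k → A) (q : Fin k → Aˣ)
    (hΔsym : ∀ i j : Fin k, i ≠ j → Δ i j = Δ j i)
    (hΔact : ∀ (σ : Equiv.Perm (Fin k)) (i j : Fin k), i ≠ j →
      σ • Δ i j = Δ (σ i) (σ j))
    (hqact : ∀ (σ : Equiv.Perm (Fin k)) (i : Fin k), σ • (q i : A) = (q (σ i) : A))
    (hann : ∀ i j : Fin k, i ≠ j → ∀ x : A, Δ i j * (x - Equiv.swap i j • x) = 0)
    (n : Fin k → ℤ) (a b : Fin k) (hab : a < b) :
    substVar A a b (rhoSurface Δ q n) = 0 :=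
  statement0_general A Δ q hΔsym hΔact hqact hann n a b hab
end
end

section
/- The Laurent polynomial ρ defined below is divisible by the Vandermonde product Π_{1 ≤ i < j ≤ k} (z_j − z_i) in A[z_1^{±1},...,z_k^{±1}]. (Consequently, every generator z_1^{n_1} * ... * z_1^{n_k} of the small universal shuffle algebra associated to surfaces can be written in the form r(z_1,...,z_k) / Π_{1 ≤ i ≠ j ≤ k}(z_i − z_j q_j), where r is a Laurent polynomial with coefficients in the coefficient ring, i.e. the a priori simple poles along z_i = z_j cancel after symmetrization.) -/
/-!
Substituting `z_a ↦ z_b` (`a < b`) kills `ρ`. Right multiplication by the transposition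
`τ = (a b)` pairs the summands of `ρ` with opposite signs, and the summand of `στ` is the image
of that of `σ` under the diagonal action of `τ` on variables and coefficients. After the
substitution the action on variables is trivial, and so is the one on coefficients: the
substituted summand is a multiple of `Δ_ab`, which annihilates `x - τ • x`. Hence `z_b - z_a`
divides `ρ`. The substitution for one pair sends the factor of any other pair to a difference of
two distinct variables, which is a non-zero-divisor, so these divisibilities combine to the
whole product.
-/

noncomputable section

open Finset

theorem sum_sign_smul_eq_zero_of_mul_swap {ι M : Type*} [DecidableEq ι] [Fintype ι]
    [AddCommGroup M] (f : Equiv.Perm ι → M) {i j : ι} (hij : i ≠ j)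
    (hf : ∀ σ, f (σ * Equiv.swap i j) = f σ) :
    ∑ σ, (Equiv.Perm.sign σ : ℤ) • f σ = 0 :=
  sum_ninvolution (· * Equiv.swap i j)
    (fun σ => by simp [hf, Equiv.Perm.sign_swap hij])
    (fun _ _ => (not_congr Equiv.mul_swap_eq_iff).mpr hij) (fun _ => mem_univ _)
    (Equiv.mul_swap_involutive i j)

theorem prod_lt_pairs_comp_perm {ι M : Type*} [LinearOrder ι] [Fintype ι] [CommMonoid M]
    (h : ι → ι → M) (hsymm : ∀ i j, i ≠ j → h i j = h j i) (g : Equiv.Perm ι) :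
    ∏ p ∈ univ.filter (fun p : ι × ι => p.1 < p.2), h (g p.1) (g p.2)
      = ∏ p ∈ univ.filter (fun p : ι × ι => p.1 < p.2), h p.1 p.2 := by
  let sort : ι × ι → ι × ι := fun p => if p.1 < p.2 then p else p.swap
  have sort_mem (p : ι × ι) (hp : p.1 ≠ p.2) :
      sort p ∈ univ.filter (fun p : ι × ι => p.1 < p.2) := by
    simp only [sort, mem_filter, mem_univ, true_and]
    split_ifs <;> grind
  refine prod_nbij' (fun p => sort (g p.1, g p.2)) (fun p => sort (g⁻¹ p.1, g⁻¹ p.2))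
    (fun p hp => sort_mem _ (g.injective.ne (mem_filter.mp hp).2.ne))
    (fun p hp => sort_mem _ (g⁻¹.injective.ne (mem_filter.mp hp).2.ne)) ?_ ?_ ?_
  all_goals
    intro p hp
    simp only [mem_filter, mem_univ, true_and] at hp
    simp only [sort]
  · split_ifs <;> simp_all [lt_asymm hp]
  · split_ifs <;> simp_all [lt_asymm hp]
  · split_ifs
    exacts [rfl, hsymm _ _ (g.injective.ne hp.ne)]

theorem Function.update_id_comp_swap {α : Type*} [DecidableEq α] (a b : α) :
    Function.update id a b ∘ Equiv.swap a b = Function.update id a b := by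
  funext i
  simp only [Function.comp_apply, Function.update_apply, id, Equiv.swap_apply_def]
  split_ifs <;> simp_all

theorem Finsupp.mapDomain_update_id {α M : Type*} [DecidableEq α] [AddCommGroup M] (a b : α)
    (m : α →₀ M) :
    m.mapDomain (Function.update id a b) = m - Finsupp.single a (m a) + Finsupp.single b (m a) := by
  induction m using Finsupp.induction_linear with
  | zero => simp
  | add m m' hm hm' =>
    rw [Finsupp.mapDomain_add, hm, hm', Finsupp.add_apply, Finsupp.single_add, Finsupp.single_add]
    abel
  | single i c =>
    rw [Finsupp.mapDomain_single]
    by_cases hi : i = a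
    · subst hi; simp
    · simp [hi, Finsupp.single_eq_of_ne' hi]

theorem AddMonoidAlgebra.eq_zero_of_single_mul_eq_self {R G : Type*} [Semiring R] [AddCommGroup G]
    {D : G →+ ℤ} {d : G} (hd : D d = 1) {X : AddMonoidAlgebra R G} (h : single d 1 * X = X) :
    X = 0 := by
  classical
  -- translation by `d` preserves the support but raises the sum of the `D`-values by its size
  have hS : X.coeff.support.image (d + ·) = X.coeff.support := by
    conv_rhs => rw [← h]
    exact (support_coeff_single_mul_eq_image X (by simp) (add_right_injective d)).symm
  have hsum : ∑ m ∈ X.coeff.support, D m = ∑ m ∈ X.coeff.support, D m + #X.coeff.support := by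
    conv_lhs => rw [← hS]
    rw [sum_image fun _ _ _ _ h => add_right_injective d h]
    simp [hd, sum_add_distrib, add_comm]
  rw [← AddMonoidAlgebra.coeff_eq_zero, ← Finsupp.support_eq_empty, ← card_eq_zero]
  omega

abbrev LaurentPoly (A : Type*) [CommRing A] (k : ℕ) := AddMonoidAlgebra A (Fin k →₀ ℤ)

namespace LaurentPoly

open AddMonoidAlgebra

variable {k : ℕ} {A : Type*} [CommRing A]

def rename (f : Fin k → Fin k) : LaurentPoly A k →+* LaurentPoly A k :=
  mapDomainRingHom A (Finsupp.mapDomain.addMonoidHom f)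

theorem rename_single (f : Fin k → Fin k) (m : Fin k →₀ ℤ) (c : A) :
    rename f (single m c) = single (m.mapDomain f) c := by
  simp [rename]

@[simp]
theorem rename_zmon (f : Fin k → Fin k) (i : Fin k) (m : ℤ) :
    rename f (zmon i m : LaurentPoly A k) = zmon (f i) m := by
  rw [zmon, rename_single, Finsupp.mapDomain_single, zmon]

@[simp]
theorem rename_cst (f : Fin k → Fin k) (c : A) : rename f (cst c : LaurentPoly A k) = cst c := by
  rw [cst, rename_single, Finsupp.mapDomain_zero]

theorem rename_rename (f g : Fin k → Fin k) (X : LaurentPoly A k) :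
    rename f (rename g X) = rename (f ∘ g) X := by
  rw [rename, rename, rename, Finsupp.mapDomain.addMonoidHom_comp, mapDomainRingHom_comp,
    RingHom.comp_apply]

theorem rename_mapRingHom (f : Fin k → Fin k) (φ : A →+* A) (X : LaurentPoly A k) :
    rename f (mapRingHom _ φ X) = mapRingHom _ φ (rename f X) :=
  (RingHom.congr_fun (mapRingHom_comp_mapDomainRingHom φ _) X).symm

@[simp]
theorem mapRingHom_zmon (φ : A →+* A) (i : Fin k) (m : ℤ) :
    mapRingHom _ φ (zmon i m : LaurentPoly A k) = zmon i m := by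
  rw [zmon, mapRingHom_single, map_one]

@[simp]
theorem mapRingHom_cst (φ : A →+* A) (c : A) :
    mapRingHom _ φ (cst c : LaurentPoly A k) = cst (φ c) := by
  rw [cst, mapRingHom_single, cst]

theorem zmon_add (i : Fin k) (m m' : ℤ) :
    (zmon i (m + m') : LaurentPoly A k) = zmon i m * zmon i m' := by
  rw [zmon, zmon, zmon, single_mul_single, Finsupp.single_add, mul_one]

theorem zmon_natCast (i : Fin k) (n : ℕ) : (zmon i n : LaurentPoly A k) = zmon i 1 ^ n := by
  rw [zmon, zmon, single_pow, one_pow, Finsupp.smul_single, nsmul_one]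

theorem zmon_sub_zmon_dvd (a b : Fin k) (t : ℤ) :
    (zmon b 1 - zmon a 1 : LaurentPoly A k) ∣ zmon b t - zmon a t := by
  obtain ⟨n, rfl | rfl⟩ := Int.eq_nat_or_neg t
  · simpa only [zmon_natCast] using sub_dvd_pow_sub_pow _ _ n
  · have hinv : ∀ i, (zmon i (-n) : LaurentPoly A k) * zmon i n = 1 := fun i => by
      rw [← zmon_add, neg_add_cancel, zmon, Finsupp.single_zero, ← one_def]
    have : (zmon b (-n) - zmon a (-n) : LaurentPoly A k)
        = zmon b (-n) * zmon a (-n) * -(zmon b n - zmon a n) := by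
      linear_combination (zmon a (-n) : LaurentPoly A k) * hinv b - zmon b (-n) * hinv a
    rw [this, zmon_natCast, zmon_natCast]
    exact dvd_mul_of_dvd_right ((sub_dvd_pow_sub_pow _ _ n).neg_right) _

theorem zmon_sub_zmon_dvd_sub_rename (a b : Fin k) (X : LaurentPoly A k) :
    zmon b 1 - zmon a 1 ∣ X - rename (Function.update id a b) X := by
  induction X using AddMonoidAlgebra.induction_linear with
  | zero => simp
  | add X Y hX hY =>
    rw [map_add, add_sub_add_comm]
    exact dvd_add hX hY
  | single m c =>
    have hsplit : ∀ i, (single (m - Finsupp.single a (m a) + Finsupp.single i (m a)) c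
        : LaurentPoly A k) = single (m - Finsupp.single a (m a)) c * zmon i (m a) := by
      intro i
      rw [zmon, single_mul_single, mul_one]
    have hm : (single m c : LaurentPoly A k)
        = single (m - Finsupp.single a (m a) + Finsupp.single a (m a)) c := by
      rw [sub_add_cancel]
    rw [rename_single, Finsupp.mapDomain_update_id, hm, hsplit a, hsplit b, ← mul_sub]
    exact dvd_mul_of_dvd_right (dvd_sub_comm.mp (zmon_sub_zmon_dvd a b _)) _

theorem eq_zero_of_zmon_sub_zmon_mul_eq_zero {a b : Fin k} (hab : a ≠ b) {X : LaurentPoly A k}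
    (h : (zmon b 1 - zmon a 1) * X = 0) : X = 0 := by
  refine eq_zero_of_single_mul_eq_self (D := Finsupp.applyAddHom b)
    (d := Finsupp.single b 1 - Finsupp.single a 1) (by simp [hab]) ?_
  have hunit : single (-Finsupp.single a 1) (1 : A) * (zmon b 1 - zmon a 1)
      = single (Finsupp.single b 1 - Finsupp.single a 1) 1 - 1 := by
    rw [zmon, zmon, mul_sub, single_mul_single, single_mul_single, neg_add_cancel, one_def,
      neg_add_eq_sub, mul_one]
  rw [← sub_eq_zero, ← sub_one_mul, ← hunit, mul_assoc, h, mul_zero]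

theorem prod_zmon_sub_zmon_dvd {S : Finset (Fin k × Fin k)} (hS : ∀ p ∈ S, p.1 < p.2)
    {X : LaurentPoly A k} (hX : ∀ p ∈ S, rename (Function.update id p.1 p.2) X = 0) :
    ∏ p ∈ S, (zmon p.2 1 - zmon p.1 1) ∣ X := by
  classical
  induction S using Finset.induction_on generalizing X with
  | empty => simp
  | insert p₀ S hp₀ ih =>
    obtain ⟨Y, rfl⟩ : zmon p₀.2 1 - zmon p₀.1 1 ∣ X := by
      simpa [hX p₀ (mem_insert_self _ _)] using zmon_sub_zmon_dvd_sub_rename p₀.1 p₀.2 X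
    rw [prod_insert hp₀]
    refine mul_dvd_mul_left _ (ih (fun p hp => hS p (mem_insert_of_mem hp)) fun p hp => ?_)
    have hne : Function.update id p.1 p.2 p₀.1 ≠ Function.update id p.1 p.2 p₀.2 := by
      have := hS p (mem_insert_of_mem hp)
      have := hS p₀ (mem_insert_self _ _)
      have : p ≠ p₀ := by rintro rfl; exact hp₀ hp
      simp only [Function.update_apply, id]
      split_ifs <;> grind
    refine eq_zero_of_zmon_sub_zmon_mul_eq_zero hne ?_
    simpa using hX p (mem_insert_of_mem hp)

theorem mapRingHom_eq_self_of_cst_dvd {φ : A →+* A} {c : A} (hc : φ c = c)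
    (hann : ∀ x, c * (x - φ x) = 0) {X : LaurentPoly A k} (hX : cst c ∣ X) :
    mapRingHom _ φ X = X := by
  obtain ⟨Y, rfl⟩ := hX
  rw [map_mul, mapRingHom_cst, hc, ← sub_eq_zero, ← neg_eq_zero, neg_sub, ← mul_sub]
  ext m
  simp [cst, coeff_single_mul_apply, hann]

end LaurentPoly

section Symmetrization

open LaurentPoly AddMonoidAlgebra Equiv

variable {k : ℕ} {A : Type*} [CommRing A] (Δ : Fin k → Fin k → A) (q : Fin k → Aˣ)
  (n : Fin k → ℤ)

def pairFactor (σ : Perm (Fin k)) (i j : Fin k) : LaurentPoly A k :=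
  if σ i < σ j then
    (zmon j 1 - zmon i 1) * (zmon j 1 - cst (q i : A) * zmon i 1) + cst (Δ i j) * zmon i 1 * zmon j 1
  else
    (zmon j 1 - zmon i 1) * (cst (q j : A) * zmon j 1 - zmon i 1) + cst (Δ i j) * zmon i 1 * zmon j 1

def rhoTerm (σ : Perm (Fin k)) : LaurentPoly A k :=
  (∏ i, zmon i (n (σ i))) *
    ∏ p ∈ univ.filter (fun p : Fin k × Fin k => p.1 < p.2), pairFactor Δ q σ p.1 p.2

theorem rhoSurface_eq_sum_rhoTerm :
    rhoSurface Δ q n = ∑ σ, (Perm.sign σ : ℤ) • rhoTerm Δ q n σ :=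
  rfl

variable {Δ q n}

theorem pairFactor_comm (hΔsym : ∀ i j : Fin k, i ≠ j → Δ i j = Δ j i) (σ : Perm (Fin k))
    {i j : Fin k} (hij : i ≠ j) : pairFactor Δ q σ j i = pairFactor Δ q σ i j := by
  rcases (σ.injective.ne hij).lt_or_gt with h | h <;>
  · simp only [pairFactor, h, h.not_gt, if_true, if_false, hΔsym i j hij]
    ring

theorem cst_dvd_rename_rhoTerm {a b : Fin k} (hab : a < b) (σ : Perm (Fin k)) :
    cst (Δ a b) ∣ rename (Function.update id a b) (rhoTerm Δ q n σ) := by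
  have hvanish : rename (Function.update id a b) (zmon b 1 - zmon a 1 : LaurentPoly A k) = 0 := by
    simp [hab.ne']
  have hpair : cst (Δ a b) ∣ rename (Function.update id a b) (pairFactor Δ q σ a b) := by
    unfold pairFactor
    split_ifs <;>
    · simp only [map_add, map_mul, hvanish, zero_mul, zero_add, rename_cst, mul_assoc]
      exact dvd_mul_right _ _
  have hmem : (a, b) ∈ univ.filter (fun p : Fin k × Fin k => p.1 < p.2) := by simpa using hab
  have hprod := dvd_prod_of_mem
    (fun p : Fin k × Fin k => rename (Function.update id a b) (pairFactor Δ q σ p.1 p.2)) hmem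
  simp only [rhoTerm, map_mul, map_prod]
  exact dvd_mul_of_dvd_right (hpair.trans hprod) _

variable [MulSemiringAction (Perm (Fin k)) A]

def permAct (g : Perm (Fin k)) : LaurentPoly A k →+* LaurentPoly A k :=
  (rename g).comp (mapRingHom _ (MulSemiringAction.toRingHom _ A g))

theorem permAct_zmon (g : Perm (Fin k)) (i : Fin k) (m : ℤ) :
    permAct g (zmon i m : LaurentPoly A k) = zmon (g i) m := by
  simp [permAct]

theorem permAct_pairFactor
    (hΔact : ∀ (σ : Perm (Fin k)) (i j : Fin k), i ≠ j → σ • Δ i j = Δ (σ i) (σ j))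
    (hqact : ∀ (σ : Perm (Fin k)) (i : Fin k), σ • (q i : A) = (q (σ i) : A))
    (g σ : Perm (Fin k)) {i j : Fin k} (hij : i ≠ j) :
    permAct g (pairFactor Δ q σ i j) = pairFactor Δ q (σ * g⁻¹) (g i) (g j) := by
  simp only [pairFactor, Perm.mul_apply, Perm.inv_def, Equiv.symm_apply_apply]
  split_ifs <;> simp [permAct, hΔact g i j hij, hqact]

theorem permAct_rhoTerm (hΔsym : ∀ i j : Fin k, i ≠ j → Δ i j = Δ j i)
    (hΔact : ∀ (σ : Perm (Fin k)) (i j : Fin k), i ≠ j → σ • Δ i j = Δ (σ i) (σ j))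
    (hqact : ∀ (σ : Perm (Fin k)) (i : Fin k), σ • (q i : A) = (q (σ i) : A))
    (g σ : Perm (Fin k)) :
    permAct g (rhoTerm Δ q n σ) = rhoTerm Δ q n (σ * g⁻¹) := by
  have hmon :
      ∏ i, zmon (g i) (n (σ i)) = ∏ i, (zmon i (n ((σ * g⁻¹) i)) : LaurentPoly A k) := by
    rw [← Equiv.prod_comp g (fun j => zmon j (n ((σ * g⁻¹) j)))]
    simp
  have hpairs : ∏ p ∈ univ.filter (fun p : Fin k × Fin k => p.1 < p.2),
      permAct g (pairFactor Δ q σ p.1 p.2)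
      = ∏ p ∈ univ.filter (fun p : Fin k × Fin k => p.1 < p.2),
          pairFactor Δ q (σ * g⁻¹) (g p.1) (g p.2) :=
    prod_congr rfl fun p hp =>
      permAct_pairFactor hΔact hqact g σ (mem_filter.mp hp).2.ne
  rw [rhoTerm, rhoTerm, map_mul, map_prod, map_prod, hpairs,
    prod_lt_pairs_comp_perm _ (fun i j hij => (pairFactor_comm hΔsym _ hij).symm)]
  simp only [permAct_zmon, hmon]

theorem rename_update_rhoTerm_mul_swap (hΔsym : ∀ i j : Fin k, i ≠ j → Δ i j = Δ j i)
    (hΔact : ∀ (σ : Perm (Fin k)) (i j : Fin k), i ≠ j → σ • Δ i j = Δ (σ i) (σ j))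
    (hqact : ∀ (σ : Perm (Fin k)) (i : Fin k), σ • (q i : A) = (q (σ i) : A))
    (hann : ∀ i j : Fin k, i ≠ j → ∀ x : A, Δ i j * (x - swap i j • x) = 0)
    {a b : Fin k} (hab : a < b) (σ : Perm (Fin k)) :
    rename (Function.update id a b) (rhoTerm Δ q n (σ * swap a b))
      = rename (Function.update id a b) (rhoTerm Δ q n σ) := by
  have hfix : swap a b • Δ a b = Δ a b := by
    rw [hΔact _ _ _ hab.ne, swap_apply_left, swap_apply_right, hΔsym _ _ hab.ne']
  rw [← swap_inv, ← permAct_rhoTerm hΔsym hΔact hqact, permAct, RingHom.comp_apply,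
    rename_rename, Function.update_id_comp_swap, rename_mapRingHom]
  exact mapRingHom_eq_self_of_cst_dvd hfix (hann a b hab.ne) (cst_dvd_rename_rhoTerm hab σ)

theorem rename_update_rhoSurface (hΔsym : ∀ i j : Fin k, i ≠ j → Δ i j = Δ j i)
    (hΔact : ∀ (σ : Perm (Fin k)) (i j : Fin k), i ≠ j → σ • Δ i j = Δ (σ i) (σ j))
    (hqact : ∀ (σ : Perm (Fin k)) (i : Fin k), σ • (q i : A) = (q (σ i) : A))
    (hann : ∀ i j : Fin k, i ≠ j → ∀ x : A, Δ i j * (x - swap i j • x) = 0)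
    {a b : Fin k} (hab : a < b) :
    rename (Function.update id a b) (rhoSurface Δ q n) = 0 := by
  rw [rhoSurface_eq_sum_rhoTerm, map_sum]
  simp only [map_zsmul]
  exact sum_sign_smul_eq_zero_of_mul_swap _ hab.ne
    (rename_update_rhoTerm_mul_swap hΔsym hΔact hqact hann hab)

end Symmetrization

theorem statement1_general {k : ℕ} (A : Type*) [CommRing A]
    [MulSemiringAction (Equiv.Perm (Fin k)) A]
    (Δ : Fin k → Fin k → A) (q : Fin k → Aˣ)
    (hΔsym : ∀ i j : Fin k, i ≠ j → Δ i j = Δ j i)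
    (hΔact : ∀ (σ : Equiv.Perm (Fin k)) (i j : Fin k), i ≠ j →
      σ • Δ i j = Δ (σ i) (σ j))
    (hqact : ∀ (σ : Equiv.Perm (Fin k)) (i : Fin k), σ • (q i : A) = (q (σ i) : A))
    (hann : ∀ i j : Fin k, i ≠ j → ∀ x : A, Δ i j * (x - Equiv.swap i j • x) = 0)
    (n : Fin k → ℤ) :
    (∏ p ∈ Finset.univ.filter (fun p : Fin k × Fin k => p.1 < p.2),
        (zmon p.2 1 - zmon p.1 1)) ∣ rhoSurface Δ q n :=
  LaurentPoly.prod_zmon_sub_zmon_dvd (fun _ hp => (mem_filter.mp hp).2) fun _ hp =>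
    rename_update_rhoSurface hΔsym hΔact hqact hann (mem_filter.mp hp).2

theorem statement1 {k : ℕ} (hk : 2 ≤ k) (A : Type*) [CommRing A]
    [MulSemiringAction (Equiv.Perm (Fin k)) A]
    (Δ : Fin k → Fin k → A) (q : Fin k → Aˣ)
    (hΔsym : ∀ i j : Fin k, i ≠ j → Δ i j = Δ j i)
    (hΔact : ∀ (σ : Equiv.Perm (Fin k)) (i j : Fin k), i ≠ j →
      σ • Δ i j = Δ (σ i) (σ j))
    (hqact : ∀ (σ : Equiv.Perm (Fin k)) (i : Fin k), σ • (q i : A) = (q (σ i) : A))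
    (hann : ∀ i j : Fin k, i ≠ j → ∀ x : A, Δ i j * (x - Equiv.swap i j • x) = 0)
    (n : Fin k → ℤ) :
    (∏ p ∈ Finset.univ.filter (fun p : Fin k × Fin k => p.1 < p.2),
        (zmon p.2 1 - zmon p.1 1)) ∣ rhoSurface Δ q n :=
  statement1_general A Δ q hΔsym hΔact hqact hann n
end
end

section
/- Assume n_1 ≥ n_2 ≥ ... ≥ n_k, and let P ∈ A[z_1^{±1},...,z_k^{±1}] be the unique Laurent polynomial with ρ_C = (Π_{1 ≤ i < j ≤ k}(z_j − z_i)) · P (unique since the Vandermonde is a non-zerodivisor). Call a permutation σ ∈ S(k) admissible if whenever i > j and σ(i) < σ(j) one has n_i = n_j. Then: (a) every exponent vector (m_1,...,m_k) occurring in the support of P satisfies (m_1,...,m_k) ≤ (n_1,...,n_k) in the lexicographic order; (b) the coefficient of the monomial z_1^{n_1} ⋯ z_k^{n_k} in P equals Σ_{σ admissible} Π_{1 ≤ i < j ≤ k with σ(i) < σ(j)} (1 − Δ_{ij}). -/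
/-!
Order exponent vectors lexicographically. For `i < j` each Vandermonde factor `z_j - z_i` and
each factor `c_{ij}^σ` is a linear form in `z_i, z_j` whose lex-leading term is a multiple of
`z_i`, with coefficient `-1`, resp. `Δ_{ij} - 1` or `-1` according as `σ(i) < σ(j)` or not.
Since `n` is antitone, `n ∘ σ` is lexicographically at most `n`, with equality exactly for the
admissible `σ`. Hence `ρ_C` has no exponent beyond `n + δ` (`z^δ` the leading monomial of the
Vandermonde) and its coefficient there is `(-1)^{k(k-1)/2} Σ_{σ admissible} Π (1 - Δ_{ij})`.
The Vandermonde's leading coefficient `(-1)^{k(k-1)/2}` is a unit, so leading terms cannot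
cancel in `Vandermonde · P`: this bounds the support of `P` by `n` and identifies its coefficient.
-/

noncomputable section

open Finset

/-- The Laurent polynomial
`ρ_C = Σ_{σ ∈ S(k)} z_1^{n_{σ(1)}} ⋯ z_k^{n_{σ(k)}} · Π_{1 ≤ i < j ≤ k} c_{ij}^σ`,
where `c_{ij}^σ = (z_j − z_i) + Δ_{ij} z_i` if `σ(i) < σ(j)` and
`c_{ij}^σ = (z_j − z_i) − Δ_{ij} z_j` if `σ(i) > σ(j)`. -/
def rhoCurve {k : ℕ} {A : Type*} [CommRing A]
    (Δ : Fin k → Fin k → A) (n : Fin k → ℤ) :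
    AddMonoidAlgebra A (Fin k →₀ ℤ) :=
  ∑ σ : Equiv.Perm (Fin k),
    (∏ i : Fin k, zmon i (n (σ i))) *
      ∏ p ∈ Finset.univ.filter (fun p : Fin k × Fin k => p.1 < p.2),
        (if σ p.1 < σ p.2 then
            (zmon p.2 1 - zmon p.1 1) + cst (Δ p.1 p.2) * zmon p.1 1
          else
            (zmon p.2 1 - zmon p.1 1) - cst (Δ p.1 p.2) * zmon p.2 1)

/-- Lexicographic comparison of exponent vectors: `f ≤ₗₑₓ g`. -/
def lexLE {k : ℕ} (f g : Fin k → ℤ) : Prop :=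
  f = g ∨ ∃ i : Fin k, (∀ j : Fin k, j < i → f j = g j) ∧ f i < g i

/-- A permutation `σ` is admissible (for the exponent sequence `n`) if
`i > j` and `σ(i) < σ(j)` imply `n_i = n_j`. -/
def Admissible {k : ℕ} (n : Fin k → ℤ) (σ : Equiv.Perm (Fin k)) : Prop :=
  ∀ i j : Fin k, j < i → σ i < σ j → n i = n j

open AddMonoidAlgebra

section LexBounded

variable {R ι M : Type*} [LinearOrder ι] [AddCommMonoid M] [LinearOrder M]

def LexBounded [Semiring R] (p : AddMonoidAlgebra R (ι →₀ M)) (a : ι →₀ M) : Prop :=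
  ∀ m ∈ p.coeff.support, toLex m ≤ toLex a

section Semiring

variable [Semiring R] {p q : AddMonoidAlgebra R (ι →₀ M)} {a b : ι →₀ M}

theorem lexBounded_single (a : ι →₀ M) (r : R) : LexBounded (single a r) a := by
  intro m hm
  rw [Finset.mem_singleton.1 (Finsupp.support_single_subset hm)]

theorem LexBounded.coeff_eq_zero (hp : LexBounded p a) {m : ι →₀ M} (hm : toLex a < toLex m) :
    p.coeff m = 0 :=
  Finsupp.notMem_support_iff.1 fun hmem => (hp m hmem).not_gt hm

theorem LexBounded.mono (hp : LexBounded p a) (hab : toLex a ≤ toLex b) : LexBounded p b :=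
  fun m hm => (hp m hm).trans hab

theorem LexBounded.sum {κ : Type*} {s : Finset κ} {f : κ → AddMonoidAlgebra R (ι →₀ M)}
    (hf : ∀ i ∈ s, LexBounded (f i) a) : LexBounded (∑ i ∈ s, f i) a := by
  classical
  intro m hm
  rw [coeff_sum] at hm
  obtain ⟨i, hi, hmi⟩ := Finsupp.mem_support_finsetSum m hm
  exact hf i hi m hmi

theorem LexBounded.add (hp : LexBounded p a) (hq : LexBounded q a) : LexBounded (p + q) a := by
  classical
  intro m hm
  rw [coeff_add] at hm
  exact (Finset.mem_union.1 (Finsupp.support_add hm)).elim (hp m) (hq m)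

variable [IsOrderedCancelAddMonoid M]

theorem LexBounded.mul (hp : LexBounded p a) (hq : LexBounded q b) :
    LexBounded (p * q) (a + b) := by
  classical
  intro m hm
  obtain ⟨x, hx, y, hy, rfl⟩ := Finset.mem_add.1 (support_coeff_mul_subset p q hm)
  rw [toLex_add, toLex_add]
  exact add_le_add (hp x hx) (hq y hy)

theorem LexBounded.coeff_mul (hp : LexBounded p a) (hq : LexBounded q b) :
    (p * q).coeff (a + b) = p.coeff a * q.coeff b := by
  classical
  rw [AddMonoidAlgebra.coeff_mul, Finsupp.sum, Finset.sum_eq_single a]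
  · rw [Finsupp.sum, Finset.sum_eq_single b, if_pos rfl]
    · exact fun y _ hyb => if_neg fun h => hyb (add_left_cancel h)
    · intro hb
      rw [Finsupp.notMem_support_iff.1 hb, mul_zero, if_pos rfl]
  · refine fun x hx hxa => Finset.sum_eq_zero fun y hy => if_neg fun h => ?_
    have hlt : toLex (x + y) < toLex (a + b) := by
      rw [toLex_add, toLex_add]
      exact add_lt_add_of_lt_of_le ((hp x hx).lt_of_ne (toLex.injective.ne hxa)) (hq y hy)
    exact hlt.ne (congrArg toLex h)
  · intro ha
    simp [Finsupp.notMem_support_iff.1 ha]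

theorem LexBounded.of_mul_left (hp : LexBounded p a) (hreg : IsLeftRegular (p.coeff a))
    (hpq : LexBounded (p * q) (a + b)) : LexBounded q b := by
  by_contra hq
  obtain ⟨m₀, hm₀, hlt₀⟩ : ∃ m ∈ q.coeff.support, toLex b < toLex m := by
    simpa [LexBounded] using hq
  obtain ⟨m, hm, hmax⟩ := q.coeff.support.exists_max_image toLex ⟨m₀, hm₀⟩
  have hcoeff : (p * q).coeff (a + m) ≠ 0 := by
    rw [hp.coeff_mul hmax]
    exact fun h => Finsupp.mem_support_iff.1 hm (hreg (h.trans (mul_zero _).symm))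
  have hle := hpq _ (Finsupp.mem_support_iff.2 hcoeff)
  rw [toLex_add, toLex_add] at hle
  exact (hlt₀.trans_le (hmax m₀ hm₀)).not_ge (le_of_add_le_add_left hle)

end Semiring

section CommSemiring

variable [IsOrderedCancelAddMonoid M] [CommSemiring R] {κ : Type*} {s : Finset κ}
  {f : κ → AddMonoidAlgebra R (ι →₀ M)} {d : κ → ι →₀ M}

theorem LexBounded.prod (hf : ∀ i ∈ s, LexBounded (f i) (d i)) :
    LexBounded (∏ i ∈ s, f i) (∑ i ∈ s, d i) := by
  induction s using Finset.cons_induction with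
  | empty =>
    rw [Finset.prod_empty, Finset.sum_empty, one_def]
    exact lexBounded_single 0 1
  | cons i s his ih =>
    rw [Finset.prod_cons, Finset.sum_cons]
    exact (hf i (s.mem_cons_self i)).mul (ih fun j hj => hf j (Finset.mem_cons_of_mem hj))

theorem LexBounded.coeff_prod (hf : ∀ i ∈ s, LexBounded (f i) (d i)) :
    (∏ i ∈ s, f i).coeff (∑ i ∈ s, d i) = ∏ i ∈ s, (f i).coeff (d i) := by
  induction s using Finset.cons_induction with
  | empty => simp [one_def]
  | cons i s his ih =>
    have hs : ∀ j ∈ s, LexBounded (f j) (d j) := fun j hj => hf j (Finset.mem_cons_of_mem hj)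
    rw [Finset.prod_cons, Finset.sum_cons, Finset.prod_cons,
      (hf i (s.mem_cons_self i)).coeff_mul (LexBounded.prod hs), ih hs]

end CommSemiring

end LexBounded

section LinearBinomial

variable {R ι : Type*} [LinearOrder ι]

section Semiring

variable [Semiring R] {i j : ι}

/-- `u z_j + v z_i`; for `i < j` its lex-leading term is `v z_i`. -/
def linearBinomial (j i : ι) (u v : R) : AddMonoidAlgebra R (ι →₀ ℤ) :=
  single (Finsupp.single j 1) u + single (Finsupp.single i 1) v

theorem lexBounded_linearBinomial (hij : i < j) (u v : R) :
    LexBounded (linearBinomial j i u v) (Finsupp.single i 1) := by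
  have hlt : toLex (Finsupp.single j (1 : ℤ)) < toLex (Finsupp.single i 1) :=
    Finsupp.Lex.lt_iff.2 ⟨i, fun l hl => by simp [hl.ne, (hl.trans hij).ne],
      by simp [hij.ne']⟩
  exact ((lexBounded_single _ u).mono hlt.le).add (lexBounded_single _ v)

theorem coeff_linearBinomial (hij : i < j) (u v : R) :
    (linearBinomial j i u v).coeff (Finsupp.single i 1) = v := by
  have hne : Finsupp.single j (1 : ℤ) ≠ Finsupp.single i 1 :=
    fun h => hij.ne' ((Finsupp.single_left_inj one_ne_zero).1 h)
  simp [linearBinomial, coeff_add, coeff_single, hne]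

end Semiring

variable [CommSemiring R] {s : Finset (ι × ι)}

theorem lexBounded_prod_linearBinomial (hs : ∀ p ∈ s, p.1 < p.2) (u v : ι × ι → R) :
    LexBounded (∏ p ∈ s, linearBinomial p.2 p.1 (u p) (v p)) (∑ p ∈ s, Finsupp.single p.1 1) :=
  LexBounded.prod fun p hp => lexBounded_linearBinomial (hs p hp) _ _

theorem coeff_prod_linearBinomial (hs : ∀ p ∈ s, p.1 < p.2) (u v : ι × ι → R) :
    (∏ p ∈ s, linearBinomial p.2 p.1 (u p) (v p)).coeff (∑ p ∈ s, Finsupp.single p.1 1) =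
      ∏ p ∈ s, v p := by
  rw [LexBounded.coeff_prod fun p hp => lexBounded_linearBinomial (hs p hp) _ _]
  exact Finset.prod_congr rfl fun p hp => coeff_linearBinomial (hs p hp) _ _

end LinearBinomial

section Rearrangement

variable {k : ℕ} {n : Fin k → ℤ}

theorem lexLE_iff_toLex_le {f g : Fin k → ℤ} :
    lexLE f g ↔
      toLex (Finsupp.equivFunOnFinite.symm f) ≤ toLex (Finsupp.equivFunOnFinite.symm g) := by
  rw [le_iff_eq_or_lt, Finsupp.Lex.lt_iff, toLex_inj, Equiv.apply_eq_iff_eq]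
  rfl

theorem Antitone.lexLE_comp_perm (hn : Antitone n) (σ : Equiv.Perm (Fin k)) :
    lexLE (n ∘ σ) n := by
  classical
  by_cases heq : n ∘ σ = n
  · exact Or.inl heq
  obtain ⟨i, hi, hmin⟩ := wellFounded_lt.has_min {i | n (σ i) ≠ n i}
    (Function.ne_iff.1 heq)
  have hbelow : ∀ j < i, n (σ j) = n j := fun j hj => not_not.1 fun hj' => hmin j hj' hj
  refine Or.inr ⟨i, hbelow, lt_of_le_of_ne (not_lt.1 fun hgt => ?_) hi⟩
  -- Otherwise `σ` maps the `#S + 1` indices of `insert i S` into `S`, the indices whose value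
  -- is `≥ n (σ i)`.
  set S := univ.filter fun u => n (σ i) ≤ n u
  have hcard : #(univ.filter fun u => n (σ i) ≤ n (σ u)) = #S :=
    Finset.card_equiv σ fun u => by simp [S]
  have hS : ∀ u ∈ S, u < i := fun u hu =>
    hn.reflect_lt (hgt.trans_le (Finset.mem_filter.1 hu).2)
  have hsub : insert i S ⊆ univ.filter fun u => n (σ i) ≤ n (σ u) := by
    intro u hu
    rcases Finset.mem_insert.1 hu with rfl | hu
    · simp
    · simpa [hbelow u (hS u hu)] using (Finset.mem_filter.1 hu).2
  have := Finset.card_le_card hsub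
  rw [Finset.card_insert_of_notMem fun hiS => lt_irrefl i (hS i hiS), hcard] at this
  omega

theorem admissible_iff_comp_eq (hn : Antitone n) (σ : Equiv.Perm (Fin k)) :
    Admissible n σ ↔ n ∘ σ = n := by
  constructor
  · intro hσ
    have hanti : Antitone (n ∘ σ.symm) := by
      intro a b hab
      by_contra hlt
      rw [not_le] at hlt
      have hab' : a < b := lt_of_le_of_ne hab fun h => by simp [h] at hlt
      exact hlt.ne (hσ (σ.symm a) (σ.symm b) (hn.reflect_lt hlt) (by simpa using hab'))
    have := Tuple.unique_antitone (σ := σ.symm) (τ := 1) hanti hn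
    funext i
    simpa using (congrFun this (σ i)).symm
  · intro h i j hji hσ
    have := hn hσ.le
    simp only [← Function.comp_apply (f := n), h] at this
    exact le_antisymm (hn hji.le) this

end Rearrangement

theorem Finset.prod_ite_sub_one_neg_one {R κ : Type*} [CommRing R] (s : Finset κ) (q : κ → Prop)
    [DecidablePred q] (f : κ → R) :
    ∏ x ∈ s, (if q x then f x - 1 else -1) = (-1) ^ #s * ∏ x ∈ s with q x, (1 - f x) := by
  rw [Finset.prod_filter, ← Finset.prod_neg]
  exact Finset.prod_congr rfl fun x _ => by split_ifs <;> ring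

section Curve

variable {k : ℕ} {A : Type*} [CommRing A]

abbrev ltPairs (k : ℕ) : Finset (Fin k × Fin k) := univ.filter fun p => p.1 < p.2

/-- Exponent of the lex-leading monomial `z_1^{k-1} z_2^{k-2} ⋯ z_k^0` of the Vandermonde. -/
def vandermondeDegree (k : ℕ) : Fin k →₀ ℤ := ∑ p ∈ ltPairs k, Finsupp.single p.1 1

theorem mem_ltPairs {p : Fin k × Fin k} : p ∈ ltPairs k ↔ p.1 < p.2 := by simp

theorem zmon_sub_zmon (i j : Fin k) :
    (zmon j 1 - zmon i 1 : AddMonoidAlgebra A (Fin k →₀ ℤ)) = linearBinomial j i 1 (-1) := by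
  simp [zmon, linearBinomial, sub_eq_add_neg]

theorem zmon_sub_zmon_add_cst_mul (i j : Fin k) (d : A) :
    zmon j 1 - zmon i 1 + cst d * zmon i 1 = linearBinomial j i 1 (d - 1) := by
  simp only [zmon, cst, linearBinomial, single_mul_single, zero_add, mul_one, single_sub]
  abel

theorem zmon_sub_zmon_sub_cst_mul (i j : Fin k) (d : A) :
    zmon j 1 - zmon i 1 - cst d * zmon j 1 = linearBinomial j i (1 - d) (-1) := by
  simp only [zmon, cst, linearBinomial, single_mul_single, zero_add, mul_one, single_sub,
    single_neg]
  abel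

theorem prod_zmon (e : Fin k → ℤ) :
    ∏ i, zmon i (e i) = (single (Finsupp.equivFunOnFinite.symm e) 1 : AddMonoidAlgebra A _) := by
  simp [zmon, Finsupp.equivFunOnFinite_symm_eq_sum]

theorem rhoCurve_eq_sum (Δ : Fin k → Fin k → A) (n : Fin k → ℤ) :
    rhoCurve Δ n = ∑ σ : Equiv.Perm (Fin k), single (Finsupp.equivFunOnFinite.symm (n ∘ σ)) 1 *
      ∏ p ∈ ltPairs k, linearBinomial p.2 p.1 (if σ p.1 < σ p.2 then 1 else 1 - Δ p.1 p.2)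
        (if σ p.1 < σ p.2 then Δ p.1 p.2 - 1 else -1) := by
  refine Finset.sum_congr rfl fun σ _ => ?_
  rw [← prod_zmon]
  refine congrArg _ (Finset.prod_congr rfl fun p _ => ?_)
  split_ifs
  · exact zmon_sub_zmon_add_cst_mul _ _ _
  · exact zmon_sub_zmon_sub_cst_mul _ _ _

theorem vandermonde_eq_prod_linearBinomial :
    ∏ p ∈ ltPairs k, (zmon p.2 1 - zmon p.1 1 : AddMonoidAlgebra A (Fin k →₀ ℤ)) =
      ∏ p ∈ ltPairs k, linearBinomial p.2 p.1 1 (-1) :=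
  Finset.prod_congr rfl fun p _ => zmon_sub_zmon p.1 p.2

theorem lexBounded_vandermonde :
    LexBounded (∏ p ∈ ltPairs k, (zmon p.2 1 - zmon p.1 1 : AddMonoidAlgebra A (Fin k →₀ ℤ)))
      (vandermondeDegree k) := by
  rw [vandermonde_eq_prod_linearBinomial]
  exact lexBounded_prod_linearBinomial (fun p hp => mem_ltPairs.1 hp) _ _

theorem coeff_vandermonde :
    (∏ p ∈ ltPairs k, (zmon p.2 1 - zmon p.1 1 : AddMonoidAlgebra A (Fin k →₀ ℤ))).coeff
      (vandermondeDegree k) = (-1) ^ #(ltPairs k) := by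
  rw [vandermonde_eq_prod_linearBinomial, vandermondeDegree,
    coeff_prod_linearBinomial (fun p hp => mem_ltPairs.1 hp), Finset.prod_const]

variable {n : Fin k → ℤ} (Δ : Fin k → Fin k → A)

theorem lexBounded_rhoCurve (hn : Antitone n) :
    LexBounded (rhoCurve Δ n) (Finsupp.equivFunOnFinite.symm n + vandermondeDegree k) := by
  rw [rhoCurve_eq_sum]
  refine LexBounded.sum fun σ _ => ?_
  refine ((lexBounded_single _ _).mul
    (lexBounded_prod_linearBinomial (fun p hp => mem_ltPairs.1 hp) _ _)).mono ?_
  rw [toLex_add, toLex_add]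
  exact add_le_add_left (lexLE_iff_toLex_le.1 (hn.lexLE_comp_perm σ)) _

open scoped Classical in
theorem coeff_rhoCurve (hn : Antitone n) :
    (rhoCurve Δ n).coeff (Finsupp.equivFunOnFinite.symm n + vandermondeDegree k) =
      (-1) ^ #(ltPairs k) * ∑ σ ∈ univ.filter (Admissible n),
        ∏ p ∈ ltPairs k with σ p.1 < σ p.2, (1 - Δ p.1 p.2) := by
  rw [rhoCurve_eq_sum, coeff_sum, Finsupp.finsetSum_apply, Finset.mul_sum, Finset.sum_filter,
    vandermondeDegree]
  refine Finset.sum_congr rfl fun σ _ => ?_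
  have hB := lexBounded_prod_linearBinomial (fun p hp => mem_ltPairs.1 hp)
    (fun p => if σ p.1 < σ p.2 then 1 else 1 - Δ p.1 p.2)
    (fun p => if σ p.1 < σ p.2 then Δ p.1 p.2 - 1 else -1)
  split_ifs with hσ
  · rw [(admissible_iff_comp_eq hn σ).1 hσ, (lexBounded_single _ _).coeff_mul hB,
      coeff_prod_linearBinomial (fun p hp => mem_ltPairs.1 hp),
      Finset.prod_ite_sub_one_neg_one]
    simp
  · refine ((lexBounded_single _ _).mul hB).coeff_eq_zero ?_
    rw [toLex_add, toLex_add]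
    refine add_lt_add_left (lt_of_le_of_ne (lexLE_iff_toLex_le.1 (hn.lexLE_comp_perm σ))
      fun h => hσ ((admissible_iff_comp_eq hn σ).2 ?_)) _
    exact Finsupp.equivFunOnFinite.symm.injective (toLex.injective h)

end Curve

open scoped Classical in
theorem statement3_general {k : ℕ} (A : Type*) [CommRing A]
    (Δ : Fin k → Fin k → A)
    (n : Fin k → ℤ) (hn : ∀ i j : Fin k, i ≤ j → n j ≤ n i)
    (P : AddMonoidAlgebra A (Fin k →₀ ℤ))
    (hP : rhoCurve Δ n =
      (∏ p ∈ Finset.univ.filter (fun p : Fin k × Fin k => p.1 < p.2),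
        (zmon p.2 1 - zmon p.1 1)) * P) :
    (∀ m : Fin k →₀ ℤ, P.coeff m ≠ 0 → lexLE (⇑m) n) ∧
    P.coeff (Finsupp.equivFunOnFinite.symm n) =
      ∑ σ ∈ Finset.univ.filter (fun σ : Equiv.Perm (Fin k) => Admissible n σ),
        ∏ p ∈ Finset.univ.filter
            (fun p : Fin k × Fin k => p.1 < p.2 ∧ σ p.1 < σ p.2),
          (1 - Δ p.1 p.2) := by
  have hanti : Antitone n := hn
  have hreg : IsLeftRegular ((-1 : A) ^ #(ltPairs k)) := (isUnit_neg_one.pow _).isRegular.left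
  have hPbound : LexBounded P (Finsupp.equivFunOnFinite.symm n) := by
    refine lexBounded_vandermonde.of_mul_left (by rwa [coeff_vandermonde]) ?_
    rw [← hP, add_comm]
    exact lexBounded_rhoCurve Δ hanti
  refine ⟨fun m hm => ?_, hreg ?_⟩
  · rw [lexLE_iff_toLex_le, Finsupp.equivFunOnFinite_symm_coe]
    exact hPbound m (Finsupp.mem_support_iff.2 hm)
  · calc (-1) ^ #(ltPairs k) * P.coeff (Finsupp.equivFunOnFinite.symm n)
        = (rhoCurve Δ n).coeff (Finsupp.equivFunOnFinite.symm n + vandermondeDegree k) := by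
          rw [hP, add_comm, lexBounded_vandermonde.coeff_mul hPbound, coeff_vandermonde]
      _ = _ := by simp only [coeff_rhoCurve Δ hanti, ltPairs, Finset.filter_filter]

open scoped Classical in
theorem statement3 {k : ℕ} (hk : 2 ≤ k) (A : Type*) [CommRing A]
    [MulSemiringAction (Equiv.Perm (Fin k)) A]
    (Δ : Fin k → Fin k → A)
    (hΔsym : ∀ i j : Fin k, i ≠ j → Δ i j = Δ j i)
    (hΔact : ∀ (σ : Equiv.Perm (Fin k)) (i j : Fin k), i ≠ j →
      σ • Δ i j = Δ (σ i) (σ j))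
    (hann : ∀ i j : Fin k, i ≠ j → ∀ x : A, Δ i j * (x - Equiv.swap i j • x) = 0)
    (n : Fin k → ℤ) (hn : ∀ i j : Fin k, i ≤ j → n j ≤ n i)
    (P : AddMonoidAlgebra A (Fin k →₀ ℤ))
    (hP : rhoCurve Δ n =
      (∏ p ∈ Finset.univ.filter (fun p : Fin k × Fin k => p.1 < p.2),
        (zmon p.2 1 - zmon p.1 1)) * P) :
    (∀ m : Fin k →₀ ℤ, P.coeff m ≠ 0 → lexLE (⇑m) n) ∧
    P.coeff (Finsupp.equivFunOnFinite.symm n) =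
      ∑ σ ∈ Finset.univ.filter (fun σ : Equiv.Perm (Fin k) => Admissible n σ),
        ∏ p ∈ Finset.univ.filter
            (fun p : Fin k × Fin k => p.1 < p.2 ∧ σ p.1 < σ p.2),
          (1 - Δ p.1 p.2) :=
  statement3_general A Δ n hn P hP
end
end

section
/- Let K be the field ℚ(q) of rational functions in one variable q over ℚ, let k ≥ 1 and let n_1, ..., n_k be integers. Then the symmetric rational function Σ_{σ ∈ S(k)} z_{σ(1)}^{n_1} ⋯ z_{σ(k)}^{n_k} · Π_{1 ≤ i < j ≤ k} (z_{σ(j)} − q·z_{σ(i)}) / (z_{σ(j)} − z_{σ(i)}), a priori an element of K(z_1,...,z_k) with simple poles along z_i = z_j, is in fact a Laurent polynomial in z_1,...,z_k with coefficients in ℤ[q]. (This is the specialization of the small universal shuffle algebra associated to curves to C = 𝔸^1, where Δ_{ij} ↦ 1 − q; for n_1 ≥ ... ≥ n_k these Laurent polynomials are, up to a constant, the Hall–Littlewood polynomials.) -/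
/-!
Multiplying the sum by the Vandermonde determinant `V = ∏_{i<j} (z_j - z_i)`, which picks up the
sign of `σ` when the variables are permuted by `σ`, turns it into the antisymmetrization of the
polynomial `z^a ∏_{i<j} (z_j - q z_i)` over `ℤ[q]`, times the monomial `(z_1 ⋯ z_k)^(-M)` that
makes the exponents `a = n + M` nonnegative. An antisymmetric polynomial vanishes under the
substitution `z_i := z_j`, so it is divisible by each of the pairwise non-associated primes
`z_j - z_i`, hence by `V`; the quotient is a polynomial with coefficients in `ℤ[q]`.
-/

noncomputable section

open Finset

/-- The field ℚ(q)(z₁,...,z_k). -/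
abbrev HLField (k : ℕ) : Type := FractionRing (MvPolynomial (Fin k) (RatFunc ℚ))

/-- The variable `q`. -/
def qVar (k : ℕ) : HLField k :=
  algebraMap (MvPolynomial (Fin k) (RatFunc ℚ)) (HLField k) (MvPolynomial.C RatFunc.X)

/-- The variables `z_i`. -/
def zVar {k : ℕ} (i : Fin k) : HLField k :=
  algebraMap (MvPolynomial (Fin k) (RatFunc ℚ)) (HLField k) (MvPolynomial.X i)

theorem Finset.prod_primes_dvd_of_pairwise_not_dvd {M ι : Type*} [CommMonoidWithZero M] {s : ι → M}
    {t : Finset ι} {z : M} (hs : ∀ i ∈ t, Prime (s i))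
    (hst : (t : Set ι).Pairwise fun i j => ¬ s i ∣ s j) (hz : ∀ i ∈ t, s i ∣ z) :
    ∏ i ∈ t, s i ∣ z := by
  classical
  induction t using Finset.induction_on with
  | empty => simp
  | insert a t hat ih =>
    simp only [Finset.mem_insert, forall_eq_or_imp] at hs hz
    rw [Finset.coe_insert] at hst
    obtain ⟨y, rfl⟩ := ih hs.2 (hst.mono (Set.subset_insert _ _)) hz.2
    have hndvd : ¬ s a ∣ ∏ i ∈ t, s i := fun h => by
      obtain ⟨i, hi, hai⟩ := (hs.1.dvd_finsetProd_iff _).mp h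
      exact hst (Set.mem_insert _ _) (Set.mem_insert_of_mem _ hi) (by rintro rfl; exact hat hi) hai
    rw [Finset.prod_insert hat, mul_comm]
    exact mul_dvd_mul_left _ ((hs.1.dvd_or_dvd hz.1).resolve_left hndvd)

namespace MvPolynomial

variable {σ R : Type*} [CommRing R] [DecidableEq σ]

theorem X_sub_X_dvd_sub_rename_update (i j : σ) (P : MvPolynomial σ R) :
    X j - X i ∣ P - rename (Function.update id i j) P := by
  set I := Ideal.span {(X j - X i : MvPolynomial σ R)}
  have h : (Ideal.Quotient.mkₐ R I).comp (rename (Function.update id i j)) =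
      Ideal.Quotient.mkₐ R I := by
    refine algHom_ext fun c => ?_
    rcases eq_or_ne c i with rfl | hc
    · simp [Ideal.Quotient.mk_eq_mk_iff_sub_mem, I]
    · simp [hc]
  rw [← Ideal.mem_span_singleton, ← Ideal.Quotient.mk_eq_mk_iff_sub_mem]
  exact (AlgHom.congr_fun h P).symm

theorem X_sub_X_dvd_of_rename_update_eq_zero {i j : σ} {P : MvPolynomial σ R}
    (h : rename (Function.update id i j) P = 0) : X j - X i ∣ P := by
  simpa [h] using X_sub_X_dvd_sub_rename_update i j P

theorem rename_update_X_sub_X (i j : σ) :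
    rename (Function.update id i j) (X j - X i : MvPolynomial σ R) = 0 := by
  rcases eq_or_ne j i with rfl | hji <;> simp [*]

theorem X_sub_X_dvd_iff_rename_update_eq_zero {i j : σ} {P : MvPolynomial σ R} :
    X j - X i ∣ P ↔ rename (Function.update id i j) P = 0 := by
  refine ⟨fun ⟨c, hc⟩ => ?_, X_sub_X_dvd_of_rename_update_eq_zero⟩
  rw [hc, map_mul, rename_update_X_sub_X, zero_mul]

theorem prime_X_sub_X [IsDomain R] {i j : σ} (hij : i ≠ j) :
    Prime (X j - X i : MvPolynomial σ R) := by
  set ψ := rename (R := R) (Function.update id i j)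
  refine ⟨sub_ne_zero.mpr (X_injective.ne hij.symm), fun hu => ?_, fun a b hab => ?_⟩
  · simpa [ψ, rename_update_X_sub_X] using hu.map ψ
  · simp only [X_sub_X_dvd_iff_rename_update_eq_zero, map_mul, mul_eq_zero] at hab ⊢
    exact hab

theorem X_sub_X_dvd_of_rename_swap_eq_neg [IsDomain R] [CharZero R] {i j : σ}
    {P : MvPolynomial σ R} (h : rename (Equiv.swap i j) P = -P) : X j - X i ∣ P := by
  have hswap : (Function.update id i j) ∘ Equiv.swap i j = Function.update id i j := by
    ext c
    simp only [Function.comp_apply, Function.update_apply, Equiv.swap_apply_def, id]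
    split_ifs <;> simp_all
  apply X_sub_X_dvd_of_rename_update_eq_zero
  rw [← self_eq_neg, ← map_neg, ← h, rename_rename, hswap]

variable [Fintype σ]

def antisymmetrization (F : MvPolynomial σ R) : MvPolynomial σ R :=
  ∑ τ : Equiv.Perm σ, (Equiv.Perm.sign τ : ℤ) • rename τ F

theorem rename_antisymmetrization (τ : Equiv.Perm σ) (F : MvPolynomial σ R) :
    rename τ (antisymmetrization F) = (Equiv.Perm.sign τ : ℤ) • antisymmetrization F := by
  have hsign : ∀ ρ : Equiv.Perm σ,
      (Equiv.Perm.sign ρ : ℤ) = Equiv.Perm.sign τ * Equiv.Perm.sign (τ * ρ) := fun ρ => by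
    rw [Equiv.Perm.sign_mul, Units.val_mul, ← mul_assoc, ← Units.val_mul, Int.units_mul_self,
      Units.val_one, one_mul]
  simp only [antisymmetrization, map_sum, map_zsmul, rename_rename, Finset.smul_sum]
  refine Fintype.sum_equiv (Equiv.mulLeft τ) _ _ fun ρ => ?_
  rw [hsign ρ, mul_smul]
  rfl

end MvPolynomial

namespace Matrix

variable {R : Type*} [CommRing R] {n : ℕ}

theorem det_vandermonde_eq_prod_filter_lt (v : Fin n → R) :
    (vandermonde v).det =
      ∏ p ∈ univ.filter (fun p : Fin n × Fin n => p.1 < p.2), (v p.2 - v p.1) := by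
  rw [det_vandermonde, Finset.prod_filter, Fintype.prod_prod_type]
  refine Finset.prod_congr rfl fun i _ => ?_
  rw [← Finset.prod_filter]
  congr 1
  ext j
  simp

theorem det_vandermonde_comp_perm (v : Fin n → R) (σ : Equiv.Perm (Fin n)) :
    (vandermonde (v ∘ σ)).det = Equiv.Perm.sign σ * (vandermonde v).det :=
  det_permute σ (vandermonde v)

open MvPolynomial in
theorem det_vandermonde_X_dvd_of_rename_eq_sign_smul [IsDomain R] [CharZero R]
    {P : MvPolynomial (Fin n) R}
    (hP : ∀ τ : Equiv.Perm (Fin n), rename τ P = (Equiv.Perm.sign τ : ℤ) • P) :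
    (vandermonde X).det ∣ P := by
  rw [det_vandermonde_eq_prod_filter_lt]
  refine prod_primes_dvd_of_pairwise_not_dvd
    (fun p hp => prime_X_sub_X (mem_filter.mp hp).2.ne) ?_ fun p hp => ?_
  · -- Substituting `X b` for `X a` kills `X d - X c` only when `(c, d) = (a, b)`.
    rintro ⟨a, b⟩ hab ⟨c, d⟩ hcd hne h
    simp only [coe_filter, mem_univ, true_and, Set.mem_ofPred_eq] at hab hcd
    simp only [X_sub_X_dvd_iff_rename_update_eq_zero, map_sub, rename_X, sub_eq_zero,
      X_inj, Function.update_apply, id] at h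
    split_ifs at h <;> grind
  · have hlt : p.1 < p.2 := by simpa using hp
    apply X_sub_X_dvd_of_rename_swap_eq_neg
    rw [hP, Equiv.Perm.sign_swap hlt.ne]
    simp

end Matrix

theorem Int.exists_nat_sub_eq {ι : Type*} [Finite ι] (n : ι → ℤ) :
    ∃ (M : ℕ) (a : ι → ℕ), ∀ i, n i = a i - M := by
  obtain ⟨b, hb⟩ := Finite.bddBelow_range n
  refine ⟨(-b).toNat, fun i => (n i + (-b).toNat).toNat, fun i => ?_⟩
  have := hb ⟨i, rfl⟩
  dsimp only
  omega

open MvPolynomial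

variable {K : Type*} [Field K]

section Laurent

variable {ι : Type*} [Fintype ι]

def IsLaurentValue (q : K) (z : ι → K) (x : K) : Prop :=
  ∃ (s : Finset (ι →₀ ℤ)) (c : (ι →₀ ℤ) → Polynomial ℤ),
    x = ∑ m ∈ s, Polynomial.aeval q (c m) * ∏ i, z i ^ m i

theorem isLaurentValue_eval₂Hom_mul_prod_zpow (q : K) {z : ι → K} (hz : ∀ i, z i ≠ 0)
    (P : MvPolynomial ι (Polynomial ℤ)) (e : ι → ℤ) :
    IsLaurentValue q z (eval₂Hom (Polynomial.aeval q).toRingHom z P * ∏ i, z i ^ e i) := by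
  classical
  set shift : (ι →₀ ℕ) → (ι →₀ ℤ) :=
    fun w => w.mapRange (↑) Nat.cast_zero + Finsupp.equivFunOnFinite.symm e
  have hshift : ∀ w i, shift w i = w i + e i := by simp [shift]
  have hinj : Function.Injective shift := fun w w' h => Finsupp.ext fun i => by
    simpa [hshift] using DFunLike.congr_fun h i
  refine ⟨P.support.image shift, Function.extend shift (coeff · P) 0, ?_⟩
  rw [sum_image hinj.injOn, coe_eval₂Hom, eval₂_eq', sum_mul]
  refine sum_congr rfl fun w _ => ?_
  rw [hinj.extend_apply, mul_assoc, ← prod_mul_distrib]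
  congr 1
  refine prod_congr rfl fun i _ => ?_
  rw [hshift, zpow_add₀ (hz i), zpow_natCast]

end Laurent

namespace HallLittlewood

open Matrix

variable {k : ℕ}

def numerator (a : Fin k → ℕ) : MvPolynomial (Fin k) (Polynomial ℤ) :=
  (∏ i, X i ^ a i) *
    ∏ p ∈ univ.filter (fun p : Fin k × Fin k => p.1 < p.2), (X p.2 - C Polynomial.X * X p.1)

theorem eval₂Hom_rename_numerator (q : K) (z : Fin k → K) (a : Fin k → ℕ)
    (σ : Equiv.Perm (Fin k)) :
    eval₂Hom (Polynomial.aeval q).toRingHom z (rename σ (numerator a)) =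
      (∏ i, z (σ i) ^ a i) *
        ∏ p ∈ univ.filter (fun p : Fin k × Fin k => p.1 < p.2), (z (σ p.2) - q * z (σ p.1)) := by
  simp [numerator]

theorem prod_zpow_comp_perm {z : Fin k → K} (hz : ∀ i, z i ≠ 0) {n : Fin k → ℤ} {M : ℕ}
    {a : Fin k → ℕ} (hn : ∀ i, n i = a i - M) (σ : Equiv.Perm (Fin k)) :
    ∏ i, z (σ i) ^ n i = (∏ i, z (σ i) ^ a i) * ∏ i, z i ^ (-(M : ℤ)) := by
  rw [← Equiv.prod_comp σ (fun i => z i ^ (-(M : ℤ))), ← prod_mul_distrib]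
  refine prod_congr rfl fun i _ => ?_
  rw [hn, sub_eq_add_neg, zpow_add₀ (hz _), zpow_natCast]

theorem term_mul_det_vandermonde (q : K) {z : Fin k → K} (hz : Function.Injective z)
    (n : Fin k → ℤ) (σ : Equiv.Perm (Fin k)) :
    (∏ i, z (σ i) ^ n i) * (∏ p ∈ univ.filter (fun p : Fin k × Fin k => p.1 < p.2),
        (z (σ p.2) - q * z (σ p.1)) / (z (σ p.2) - z (σ p.1))) * (vandermonde z).det =
      Equiv.Perm.sign σ * ((∏ i, z (σ i) ^ n i) *
        ∏ p ∈ univ.filter (fun p : Fin k × Fin k => p.1 < p.2), (z (σ p.2) - q * z (σ p.1))) := by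
  have hD : (vandermonde z).det ≠ 0 := det_vandermonde_ne_zero_iff.mpr hz
  have hsign : ((Equiv.Perm.sign σ : ℤ) : K) * Equiv.Perm.sign σ = 1 := by
    rw [← Int.cast_mul, ← Units.val_mul, Int.units_mul_self, Units.val_one, Int.cast_one]
  have hσ := det_vandermonde_comp_perm z σ
  rw [det_vandermonde_eq_prod_filter_lt] at hσ
  simp only [Function.comp_apply] at hσ
  rw [prod_div_distrib, hσ, div_eq_mul_inv, mul_inv, inv_eq_of_mul_eq_one_right hsign]
  field_simp

theorem isLaurentValue_sum (q : K) {z : Fin k → K} (hz0 : ∀ i, z i ≠ 0)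
    (hz : Function.Injective z) (n : Fin k → ℤ) :
    IsLaurentValue q z (∑ σ : Equiv.Perm (Fin k), (∏ i, z (σ i) ^ n i) *
      ∏ p ∈ univ.filter (fun p : Fin k × Fin k => p.1 < p.2),
        (z (σ p.2) - q * z (σ p.1)) / (z (σ p.2) - z (σ p.1))) := by
  obtain ⟨M, a, hn⟩ := Int.exists_nat_sub_eq n
  obtain ⟨Q, hQ⟩ :=
    det_vandermonde_X_dvd_of_rename_eq_sign_smul (rename_antisymmetrization · (numerator a))
  set ev := eval₂Hom (Polynomial.aeval (R := ℤ) q).toRingHom z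
  have hV : ev (vandermonde X).det = (vandermonde z).det := by
    rw [RingHom.map_det]
    congr
    ext
    simp [vandermonde_apply, ev]
  have hev : ev (antisymmetrization (numerator a)) =
      ∑ σ : Equiv.Perm (Fin k), Equiv.Perm.sign σ * ev (rename σ (numerator a)) := by
    simp only [antisymmetrization, map_sum, zsmul_eq_mul, map_mul, map_intCast]
  convert isLaurentValue_eval₂Hom_mul_prod_zpow q hz0 Q (fun _ => -(M : ℤ)) using 1
  apply mul_right_cancel₀ (det_vandermonde_ne_zero_iff.mpr hz)
  rw [sum_mul, ← hV, mul_right_comm, ← map_mul, mul_comm Q, ← hQ, hev, sum_mul, hV]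
  refine sum_congr rfl fun σ _ => ?_
  rw [term_mul_det_vandermonde q hz, prod_zpow_comp_perm hz0 hn, eval₂Hom_rename_numerator]
  ring

end HallLittlewood

theorem statement5_general (k : ℕ) (n : Fin k → ℤ) :
    ∃ (s : Finset (Fin k →₀ ℤ)) (c : (Fin k →₀ ℤ) → Polynomial ℤ),
      ∑ σ : Equiv.Perm (Fin k),
        (∏ i : Fin k, zVar (σ i) ^ n i) *
          ∏ p ∈ Finset.univ.filter (fun p : Fin k × Fin k => p.1 < p.2),
            (zVar (σ p.2) - qVar k * zVar (σ p.1)) / (zVar (σ p.2) - zVar (σ p.1))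
      = ∑ m ∈ s, Polynomial.aeval (qVar k) (c m) * ∏ i : Fin k, zVar i ^ (m i) := by
  have hinj : Function.Injective (algebraMap (MvPolynomial (Fin k) (RatFunc ℚ)) (HLField k)) :=
    IsFractionRing.injective _ _
  have hz0 (i : Fin k) : zVar i ≠ 0 := (map_ne_zero_iff _ hinj).mpr (X_ne_zero i)
  obtain ⟨s, c, h⟩ := HallLittlewood.isLaurentValue_sum (qVar k) hz0 (hinj.comp X_injective) n
  refine ⟨s, c, h.trans (sum_congr rfl fun m _ => ?_)⟩
  -- `aeval` in the statement uses the `ℤ`-algebra structure of the localization `HLField k`.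
  congr <;> exact Subsingleton.elim _ _

theorem statement5 (k : ℕ) (hk : 1 ≤ k) (n : Fin k → ℤ) :
    ∃ (s : Finset (Fin k →₀ ℤ)) (c : (Fin k →₀ ℤ) → Polynomial ℤ),
      ∑ σ : Equiv.Perm (Fin k),
        (∏ i : Fin k, zVar (σ i) ^ n i) *
          ∏ p ∈ Finset.univ.filter (fun p : Fin k × Fin k => p.1 < p.2),
            (zVar (σ p.2) - qVar k * zVar (σ p.1)) / (zVar (σ p.2) - zVar (σ p.1))
      = ∑ m ∈ s, Polynomial.aeval (qVar k) (c m) * ∏ i : Fin k, zVar i ^ (m i) :=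
  statement5_general k n
end
end
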